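/- Let p ≥ 2 be an integer and β > β_0 > β*(p), and let X = (X_1,…,X_n) be distributed according to the p-tensor Curie-Weiss model P_{β_0,p} on {−1,1}^n. Then lim_{n→∞} (1/n) log P_{β_0,p}(X̄_n > m_*(β,p)) = sup_{x ∈ (m_*(β,p), 1]} H_{β_0,p}(x) − sup_{x∈[−1,1]} H_{β_0,p}(x), and this limit is strictly negative. -/

import Mathlib

open Real Set Filter

/-- `I(x) = ½[(1+x)log(1+x) + (1−x)log(1−x)]` (with `Real.log 0 = 0`). -/
noncomputable def bahI (x : ℝ) : ℝ :=
  ((1 + x) * Real.log (1 + x) + (1 - x) * Real.log (1 - x)) / 2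

/-- `H_{β,p}(x) = β xᵖ − I(x)`. -/
noncomputable def bahH (β : ℝ) (p : ℕ) (x : ℝ) : ℝ := β * x ^ p - bahI x

/-- `β*(p) = sup {β ≥ 0 : sup_{x∈[−1,1]} H_{β,p}(x) = 0}`. -/
noncomputable def betaStar (p : ℕ) : ℝ :=
  sSup {β : ℝ | 0 ≤ β ∧ sSup (bahH β p '' Set.Icc (-1 : ℝ) 1) = 0}

/-- inverse hyperbolic tangent. -/
noncomputable def arctanh (x : ℝ) : ℝ := Real.log ((1 + x) / (1 - x)) / 2

/-- `η_p(t) = p⁻¹ t^{1−p} arctanh t` for `t ≠ 0`, and `η_p(0) = 0`. -/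
noncomputable def etaFn (p : ℕ) (t : ℝ) : ℝ :=
  if t = 0 then 0 else (p : ℝ)⁻¹ * t ^ (1 - (p : ℤ)) * arctanh t

/-- The spin value of a Boolean coordinate: `true ↦ 1`, `false ↦ −1`. -/
noncomputable def spin (b : Bool) : ℝ := if b then 1 else -1

/-- The average magnetization `X̄ = n⁻¹ Σᵢ Xᵢ` of a configuration in `{−1,1}ⁿ`. -/
noncomputable def mag {n : ℕ} (σ : Fin n → Bool) : ℝ := (∑ i, spin (σ i)) / n

/-- The unnormalized Curie–Weiss weight `exp(β n^{1−p} (Σᵢ xᵢ)ᵖ)` of a configuration. -/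
noncomputable def cwWeight (β : ℝ) (p n : ℕ) (σ : Fin n → Bool) : ℝ :=
  Real.exp (β * (n : ℝ) ^ (1 - (p : ℤ)) * (∑ i, spin (σ i)) ^ p)

/-- The probability of the event `E` under the `p`-tensor Curie–Weiss model `P_{β,p}`
on `{−1,1}ⁿ` (the normalizations `2ⁿ Z_n(β,p)` cancel in this ratio). -/
noncomputable def cwProb (β : ℝ) (p n : ℕ) (E : Set (Fin n → Bool)) : ℝ :=
  (∑ σ : Fin n → Bool, E.indicator (cwWeight β p n) σ)
    / ∑ σ : Fin n → Bool, cwWeight β p n σ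

/-!
Grouping configurations by their number `k` of `+1` spins, the Curie–Weiss mass of `{X̄ ∈ A}`
becomes `∑ C(n,k) exp(n β₀ x_kᵖ)` over the grid points `x_k = (2k − n)/n ∈ A`. Up to a factor
in `[1/(n+1), 1]`, `C(n,k) = exp(n h(k/n)) = exp(n (log 2 − I(x_k)))`, and there are at most `n + 1`
terms, so `(1/n) log` of the sum tends to `log 2 + sup_A H_{β₀,p}` (grid points approach every
point of `A` from above, and `H_{β₀,p}` is continuous). The limit is the difference of the
exponents for `A = (m, 1]` and `A = [−1, 1]`.

It is negative: on `(m, 1]`, `H_{β₀,p} = H_{β,p} − (β − β₀) xᵖ < H_{β₀,p}(m)`, while `m` does not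
maximize `H_{β₀,p}` because `H_{β₀,p}'(m) = H_{β,p}'(m) − (β − β₀) p m^{p−1} < 0`. Here `m` is an
interior point since `H_{β,p}' = β p x^{p−1} − artanh x → −∞` as `x → 1`.
-/

open Finset Topology

namespace Nat

lemma sum_choose_mul_pow_mul_pow {n k : ℕ} (hk : k ≤ n) :
    ∑ j ∈ range (n + 1), n.choose j * k ^ j * (n - k) ^ (n - j) = n ^ n := by
  rw [← Nat.add_sub_cancel' hk, add_pow, Nat.add_sub_cancel' hk]
  exact sum_congr rfl fun j _ => by rw [Nat.cast_id]; ring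

lemma choose_succ_mul_pow_mul_pow {n k j : ℕ} (hj : j < n) :
    n.choose (j + 1) * k ^ (j + 1) * (n - k) ^ (n - (j + 1)) * ((j + 1) * (n - k)) =
      n.choose j * k ^ j * (n - k) ^ (n - j) * ((n - j) * k) := by
  have hpow : (n - k) ^ (n - j) = (n - k) ^ (n - (j + 1)) * (n - k) := by
    rw [← pow_succ]; congr 1; omega
  rw [hpow]
  calc _ = n.choose (j + 1) * (j + 1) * k ^ j * k * ((n - k) ^ (n - (j + 1)) * (n - k)) := by ring
    _ = _ := by rw [Nat.choose_succ_right_eq]; ring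

lemma choose_mul_pow_mul_pow_le {n k : ℕ} (hk : k ≤ n) (j : ℕ) :
    n.choose j * k ^ j * (n - k) ^ (n - j) ≤ n.choose k * k ^ k * (n - k) ^ (n - k) := by
  set t : ℕ → ℕ := fun j => n.choose j * k ^ j * (n - k) ^ (n - j)
  have hmono : MonotoneOn t (Set.Iic k) := by
    refine monotoneOn_of_le_add_one Set.ordConnected_Iic fun j _ _ hj1 => ?_
    have hj1 : j + 1 ≤ k := hj1
    have hpos : 0 < (n - j) * k := Nat.mul_pos (by omega) (by omega)
    refine Nat.le_of_mul_le_mul_right ?_ hpos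
    rw [← choose_succ_mul_pow_mul_pow (by omega)]
    refine Nat.mul_le_mul_left _ ?_
    calc (j + 1) * (n - k) ≤ k * (n - j) := Nat.mul_le_mul hj1 (by omega)
      _ = (n - j) * k := mul_comm _ _
  have hanti : AntitoneOn t (Set.Ici k) := by
    refine antitoneOn_of_add_one_le Set.ordConnected_Ici fun j _ hj _ => ?_
    have hj : k ≤ j := hj
    rcases lt_or_ge j n with hjn | hjn
    · have hpos : 0 < (j + 1) * (n - k) := Nat.mul_pos (by omega) (by omega)
      refine Nat.le_of_mul_le_mul_right ?_ hpos
      rw [choose_succ_mul_pow_mul_pow hjn]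
      refine Nat.mul_le_mul_left _ ?_
      calc (n - j) * k ≤ (n - k) * (j + 1) := Nat.mul_le_mul (by omega) (by omega)
        _ = (j + 1) * (n - k) := mul_comm _ _
    · simp [t, Nat.choose_eq_zero_of_lt (show n < j + 1 by omega)]
  rcases le_total j k with hjk | hkj
  · exact hmono hjk (Set.mem_Iic.2 le_rfl) hjk
  · exact hanti (Set.mem_Ici.2 le_rfl) hkj hkj

end Nat

lemma exp_mul_log_div_mul_pow {a : ℝ} (ha : 0 < a) (j : ℕ) :
    exp (j * log (a / j)) * (j : ℝ) ^ j = a ^ j := by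
  rcases Nat.eq_zero_or_pos j with rfl | hj
  · simp
  · rw [exp_nat_mul, exp_log (by positivity), div_pow, div_mul_cancel₀ _ (by positivity)]

lemma exp_mul_binEntropy_mul_pow_mul_pow {n k : ℕ} (hk : k ≤ n) :
    exp (n * binEntropy (k / n)) * ((k ^ k * (n - k) ^ (n - k) : ℕ) : ℝ) = (n : ℝ) ^ n := by
  rcases Nat.eq_zero_or_pos n with rfl | hn
  · obtain rfl := Nat.le_zero.1 hk
    simp
  have hn' : (0 : ℝ) < n := by exact_mod_cast hn
  have hnk : ((n - k : ℕ) : ℝ) = n - k := by rw [Nat.cast_sub hk]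
  have hent : n * binEntropy (k / n) =
      k * log (n / k) + ((n - k : ℕ) : ℝ) * log (n / (n - k : ℕ)) := by
    rw [binEntropy, inv_div, hnk, show (1 : ℝ) - k / n = (n - k) / n by field_simp, inv_div]
    field_simp
  rw [hent, exp_add]
  push_cast
  calc _ = (exp (k * log (n / k)) * (k : ℝ) ^ k) *
        (exp (((n - k : ℕ) : ℝ) * log (n / (n - k : ℕ))) * ((n - k : ℕ) : ℝ) ^ (n - k)) := by
        rw [hnk]; ring
    _ = (n : ℝ) ^ n := by
        rw [exp_mul_log_div_mul_pow hn', exp_mul_log_div_mul_pow hn', ← pow_add,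
          Nat.add_sub_cancel' hk]

lemma choose_le_exp_mul_binEntropy {n k : ℕ} (hk : k ≤ n) :
    (n.choose k : ℝ) ≤ exp (n * binEntropy (k / n)) := by
  have hpos : (0 : ℝ) < ((k ^ k * (n - k) ^ (n - k) : ℕ) : ℝ) := by
    exact_mod_cast Nat.mul_pos (Nat.pow_self_pos) (Nat.pow_self_pos)
  have hnat : n.choose k * (k ^ k * (n - k) ^ (n - k)) ≤ n ^ n := by
    rw [← Nat.sum_choose_mul_pow_mul_pow hk, ← mul_assoc]
    exact single_le_sum (f := fun j => n.choose j * k ^ j * (n - k) ^ (n - j))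
      (fun _ _ => Nat.zero_le _) (mem_range.mpr (Nat.lt_succ_of_le hk))
  rw [← mul_le_mul_iff_of_pos_right hpos, exp_mul_binEntropy_mul_pow_mul_pow hk]
  exact_mod_cast hnat

lemma exp_mul_binEntropy_le_choose {n k : ℕ} (hk : k ≤ n) :
    exp (n * binEntropy (k / n)) ≤ (n + 1) * (n.choose k : ℝ) := by
  have hpos : (0 : ℝ) < ((k ^ k * (n - k) ^ (n - k) : ℕ) : ℝ) := by
    exact_mod_cast Nat.mul_pos (Nat.pow_self_pos) (Nat.pow_self_pos)
  have hnat : n ^ n ≤ (n + 1) * n.choose k * (k ^ k * (n - k) ^ (n - k)) := by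
    rw [← Nat.sum_choose_mul_pow_mul_pow hk]
    calc _ ≤ ∑ _j ∈ range (n + 1), n.choose k * k ^ k * (n - k) ^ (n - k) :=
          sum_le_sum fun j _ => Nat.choose_mul_pow_mul_pow_le hk j
      _ = _ := by rw [sum_const, card_range, smul_eq_mul]; ring
  rw [← mul_le_mul_iff_of_pos_right hpos, exp_mul_binEntropy_mul_pow_mul_pow hk]
  exact_mod_cast hnat

section LogSumExp

variable {ι : Type*} {s : Finset ι} {a c : ι → ℝ} {t N : ℝ}

lemma one_div_mul_log_sum_le {S : ℝ} (ht : 0 < t) (hs : 0 < ∑ i ∈ s, a i) (hN : (#s : ℝ) ≤ N)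
    (ha : ∀ i ∈ s, a i ≤ exp (t * c i)) (hc : ∀ i ∈ s, c i ≤ S) :
    1 / t * log (∑ i ∈ s, a i) ≤ S + log N / t := by
  have hsum : ∑ i ∈ s, a i ≤ N * exp (t * S) :=
    calc ∑ i ∈ s, a i ≤ ∑ _i ∈ s, exp (t * S) :=
          sum_le_sum fun i hi => (ha i hi).trans (exp_le_exp.2 (by gcongr; exact hc i hi))
      _ = #s * exp (t * S) := by rw [sum_const, nsmul_eq_mul]
      _ ≤ N * exp (t * S) := by gcongr
  have hN0 : 0 < N := pos_of_mul_pos_left (hs.trans_le hsum) (exp_pos _).le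
  have hlog : log (∑ i ∈ s, a i) ≤ log N + t * S := by
    rw [← log_exp (t * S), ← log_mul hN0.ne' (exp_pos _).ne']
    exact log_le_log hs hsum
  rw [one_div_mul_eq_div, div_le_iff₀ ht, add_mul, div_mul_cancel₀ _ ht.ne']
  linarith

lemma le_one_div_mul_log_sum {i₀ : ι} (ht : 0 < t) (hN : 0 ≤ N) (ha : ∀ i ∈ s, 0 ≤ a i)
    (hi₀ : i₀ ∈ s) (ha₀ : exp (t * c i₀) ≤ N * a i₀) :
    c i₀ - log N / t ≤ 1 / t * log (∑ i ∈ s, a i) := by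
  have hsum : exp (t * c i₀) ≤ N * ∑ i ∈ s, a i :=
    ha₀.trans (mul_le_mul_of_nonneg_left (single_le_sum ha hi₀) hN)
  have hpos := (exp_pos _).trans_le hsum
  have hN0 : 0 < N := pos_of_mul_pos_left hpos (sum_nonneg ha)
  have hs : 0 < ∑ i ∈ s, a i := pos_of_mul_pos_right hpos hN
  have hlog : t * c i₀ ≤ log N + log (∑ i ∈ s, a i) := by
    rw [← log_mul hN0.ne' hs.ne', ← log_exp (t * c i₀)]
    exact log_le_log (exp_pos _) hsum
  rw [one_div_mul_eq_div, le_div_iff₀ ht, sub_mul, div_mul_cancel₀ _ ht.ne']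
  linarith

end LogSumExp

lemma tendsto_log_natCast_add_one_div :
    Tendsto (fun n : ℕ => log (n + 1) / n) atTop (𝓝 0) := by
  refine ((tendsto_pow_log_div_mul_add_atTop 1 (-1) 1 one_ne_zero).comp
    (tendsto_atTop_add_const_right _ 1 tendsto_natCast_atTop_atTop)).congr fun n => ?_
  simp

lemma tendsto_one_div_mul_log_sum {F : ℕ → Finset ℕ} {a c : ℕ → ℕ → ℝ} {S : ℝ}
    (hF : ∀ n, #(F n) ≤ n + 1)
    (ha_le : ∀ n, ∀ k ∈ F n, a n k ≤ exp (n * c n k))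
    (ha_ge : ∀ n, ∀ k ∈ F n, exp (n * c n k) ≤ (n + 1) * a n k)
    (hc_le : ∀ n, ∀ k ∈ F n, c n k ≤ S)
    (hc_ge : ∀ ε > 0, ∀ᶠ n in atTop, ∃ k ∈ F n, S - ε ≤ c n k) :
    Tendsto (fun n : ℕ => 1 / (n : ℝ) * log (∑ k ∈ F n, a n k)) atTop (𝓝 S) := by
  have ha_pos : ∀ n, ∀ k ∈ F n, 0 < a n k := fun n k hk =>
    pos_of_mul_pos_right ((exp_pos _).trans_le (ha_ge n k hk)) (by positivity)
  have hF' : ∀ n, (#(F n) : ℝ) ≤ n + 1 := fun n => by exact_mod_cast hF n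
  have lower : ∀ ε > 0, ∀ᶠ n : ℕ in atTop,
      S - ε - log (n + 1) / n ≤ 1 / (n : ℝ) * log (∑ k ∈ F n, a n k) := by
    intro ε hε
    filter_upwards [hc_ge ε hε, eventually_gt_atTop 0] with n ⟨k, hk, hck⟩ hn
    refine le_trans ?_ (le_one_div_mul_log_sum (by positivity) (by positivity)
      (fun i hi => (ha_pos n i hi).le) hk (ha_ge n k hk))
    linarith
  have upper : ∀ᶠ n : ℕ in atTop,
      1 / (n : ℝ) * log (∑ k ∈ F n, a n k) ≤ S + log (n + 1) / n := by
    filter_upwards [hc_ge 1 one_pos, eventually_gt_atTop 0] with n ⟨k, hk, _⟩ hn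
    exact one_div_mul_log_sum_le (by positivity) (sum_pos (ha_pos n) ⟨k, hk⟩) (hF' n)
      (ha_le n) (hc_le n)
  refine tendsto_order.2 ⟨fun b hb => ?_, fun b hb => ?_⟩
  · have hε : 0 < (S - b) / 2 := by linarith
    filter_upwards [lower _ hε, tendsto_log_natCast_add_one_div.eventually (gt_mem_nhds hε)]
      with n hn hlog
    linarith
  · filter_upwards [upper, tendsto_log_natCast_add_one_div.eventually (gt_mem_nhds (sub_pos.2 hb))]
      with n hn hlog
    linarith

noncomputable def gridPoint (n k : ℕ) : ℝ := (2 * k - n) / n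

lemma gridPoint_mem_Icc {n k : ℕ} (hk : k ≤ n) : gridPoint n k ∈ Set.Icc (-1) 1 := by
  rcases Nat.eq_zero_or_pos n with rfl | hn
  · simp [gridPoint]
  have hn' : (0 : ℝ) < n := by exact_mod_cast hn
  have hk' : (k : ℝ) ≤ n := by exact_mod_cast hk
  rw [gridPoint, Set.mem_Icc, le_div_iff₀ hn', div_le_iff₀ hn']
  constructor <;> linarith [(Nat.cast_nonneg k : (0 : ℝ) ≤ k)]

lemma gridPoint_self {n : ℕ} (hn : n ≠ 0) : gridPoint n n = 1 := by
  have : (n : ℝ) ≠ 0 := by exact_mod_cast hn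
  rw [gridPoint]; field_simp; ring

lemma bahI_two_mul_sub_one (q : ℝ) : bahI (2 * q - 1) = log 2 - binEntropy q := by
  have key : ∀ r : ℝ, r * log (2 * r) = r * log 2 + r * log r := by
    intro r
    rcases eq_or_ne r 0 with rfl | hr
    · simp
    · rw [log_mul two_ne_zero hr]; ring
  have h1 : 1 + (2 * q - 1) = 2 * q := by ring
  have h2 : 1 - (2 * q - 1) = 2 * (1 - q) := by ring
  rw [bahI, binEntropy, h1, h2, mul_assoc, key, mul_assoc, key, log_inv, log_inv]
  ring

-- The factor `n` keeps this true at `n = 0`, where `gridPoint 0 0 = 0 ≠ 2 * (0 / 0) - 1`.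
lemma natCast_mul_log_two_sub_bahI_gridPoint (n k : ℕ) :
    n * (log 2 - bahI (gridPoint n k)) = n * binEntropy (k / n) := by
  rcases eq_or_ne n 0 with rfl | hn
  · simp
  have : gridPoint n k = 2 * (k / n : ℝ) - 1 := by
    have : (n : ℝ) ≠ 0 := by exact_mod_cast hn
    rw [gridPoint]; field_simp
  rw [this, bahI_two_mul_sub_one, sub_sub_cancel]

lemma exists_gridPoint_tendsto {y : ℝ} (hy : y ∈ Set.Icc (-1) 1) :
    ∃ k : ℕ → ℕ, (∀ n, k n ≤ n) ∧ (∀ᶠ n in atTop, y ≤ gridPoint n (k n)) ∧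
      Tendsto (fun n => gridPoint n (k n)) atTop (𝓝 y) := by
  have bounds : ∀ n : ℕ, n ≠ 0 →
      y ≤ gridPoint n ⌈n * (1 + y) / 2⌉₊ ∧ gridPoint n ⌈n * (1 + y) / 2⌉₊ ≤ y + 2 / n := by
    intro n hn
    have hn' : (0 : ℝ) < n := by positivity
    have h0 : 0 ≤ n * (1 + y) / 2 := by nlinarith [hy.1]
    have hle := Nat.le_ceil (n * (1 + y) / 2)
    have hlt := Nat.ceil_lt_add_one h0
    rw [gridPoint, le_div_iff₀ hn', div_le_iff₀ hn', add_mul, div_mul_cancel₀ _ hn'.ne']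
    constructor <;> linarith
  refine ⟨fun n => ⌈n * (1 + y) / 2⌉₊, fun n => Nat.ceil_le.2 ?_, ?_, ?_⟩
  · nlinarith [hy.2, (Nat.cast_nonneg n : (0 : ℝ) ≤ n)]
  · filter_upwards [eventually_ne_atTop 0] with n hn using (bounds n hn).1
  · have h2n : Tendsto (fun n : ℕ => y + 2 / (n : ℝ)) atTop (𝓝 y) := by
      simpa using tendsto_const_nhds.add (tendsto_const_div_atTop_nhds_zero_nat (2 : ℝ))
    refine tendsto_of_tendsto_of_tendsto_of_le_of_le' tendsto_const_nhds h2n ?_ ?_ <;>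
      filter_upwards [eventually_ne_atTop 0] with n hn
    exacts [(bounds n hn).1, (bounds n hn).2]

lemma continuous_bahI : Continuous bahI := by unfold bahI; fun_prop

open scoped Classical in
noncomputable def gridSum (g : ℝ → ℝ) (A : Set ℝ) (n : ℕ) : ℝ :=
  ∑ k ∈ (range (n + 1)).filter (fun k => gridPoint n k ∈ A),
    n.choose k * exp (n * g (gridPoint n k))

lemma gridSum_pos (g : ℝ → ℝ) {A : Set ℝ} (hA : 1 ∈ A) {n : ℕ} (hn : n ≠ 0) :
    0 < gridSum g A n := by
  refine sum_pos' (fun k _ => by positivity) ⟨n, ?_, by rw [Nat.choose_self]; positivity⟩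
  simp [gridPoint_self hn, hA]

theorem tendsto_one_div_mul_log_gridSum {g : ℝ → ℝ} (hg : Continuous g) {A : Set ℝ}
    (hA : A.OrdConnected) (hA1 : 1 ∈ A) (hA_sub : A ⊆ Set.Icc (-1) 1) :
    Tendsto (fun n : ℕ => 1 / (n : ℝ) * log (gridSum g A n)) atTop
      (𝓝 (log 2 + sSup ((fun x => g x - bahI x) '' A))) := by
  classical
  set H : ℝ → ℝ := fun x => g x - bahI x
  have hH : Continuous H := hg.sub continuous_bahI
  have hbdd : BddAbove (H '' A) :=
    (isCompact_Icc.image hH).bddAbove.mono (Set.image_mono hA_sub)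
  have hexp : ∀ n k : ℕ, exp (n * binEntropy (k / n)) * exp (n * g (gridPoint n k)) =
      exp (n * (log 2 + H (gridPoint n k))) := fun n k => by
    rw [← exp_add, ← natCast_mul_log_two_sub_bahI_gridPoint]; congr 1; simp only [H]; ring
  refine tendsto_one_div_mul_log_sum
    (F := fun n => (range (n + 1)).filter (fun k => gridPoint n k ∈ A))
    (c := fun n k => log 2 + H (gridPoint n k))
    (fun n => (card_filter_le _ _).trans_eq (card_range _)) (fun n k hk => ?_) (fun n k hk => ?_) (fun n k hk => ?_) (fun ε hε => ?_)
  · rw [← hexp]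
    gcongr
    exact choose_le_exp_mul_binEntropy (Nat.lt_succ_iff.1 (mem_range.1 (mem_filter.1 hk).1))
  · rw [← hexp, ← mul_assoc]
    gcongr
    exact exp_mul_binEntropy_le_choose (Nat.lt_succ_iff.1 (mem_range.1 (mem_filter.1 hk).1))
  · gcongr
    exact le_csSup hbdd ⟨_, (mem_filter.1 hk).2, rfl⟩
  · obtain ⟨_, ⟨y, hyA, rfl⟩, hy⟩ := exists_lt_of_lt_csSup (Set.Nonempty.image H ⟨1, hA1⟩)
      (sub_lt_self (sSup (H '' A)) (half_pos hε))
    obtain ⟨k, hkn, hyk, hk⟩ := exists_gridPoint_tendsto (hA_sub hyA)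
    have hHk := ((hH.tendsto y).comp hk).eventually (lt_mem_nhds (sub_lt_self (H y) (half_pos hε)))
    filter_upwards [hyk, hHk] with n hyn hHn
    refine ⟨k n, mem_filter.2 ⟨mem_range.2 (Nat.lt_succ_of_le (hkn n)), ?_⟩, ?_⟩
    · exact hA.out hyA hA1 ⟨hyn, (gridPoint_mem_Icc (hkn n)).2⟩
    · simp only [Function.comp] at hHn
      linarith

lemma sum_spin_eq {n : ℕ} (σ : Fin n → Bool) :
    ∑ i, spin (σ i) = 2 * #{i | σ i = true} - n := by
  have h : ∀ i, spin (σ i) = 2 * (if σ i = true then 1 else 0) - 1 := by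
    intro i; cases σ i <;> norm_num [spin]
  simp only [h, sum_sub_distrib, ← mul_sum, sum_boole]
  simp

lemma sum_fun_bool_eq_sum_choose {M : Type*} [AddCommMonoid M] (n : ℕ) (g : ℕ → M) :
    ∑ σ : Fin n → Bool, g #{i | σ i = true} = ∑ k ∈ range (n + 1), n.choose k • g k := by
  have := sum_powerset_apply_card g (x := (univ : Finset (Fin n)))
  rw [card_univ, Fintype.card_fin] at this
  rw [← this]
  refine sum_nbij' (fun σ => ({i | σ i = true} : Finset (Fin n))) (fun s i => decide (i ∈ s))
    ?_ ?_ ?_ ?_ ?_ <;> intros <;> simp_all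

lemma mag_eq_gridPoint {n : ℕ} (σ : Fin n → Bool) : mag σ = gridPoint n #{i | σ i = true} := by
  rw [mag, sum_spin_eq, gridPoint]

lemma mag_mem_Icc {n : ℕ} (σ : Fin n → Bool) : mag σ ∈ Set.Icc (-1) 1 := by
  rw [mag_eq_gridPoint]
  exact gridPoint_mem_Icc ((card_filter_le _ _).trans_eq (card_fin n))

lemma cwWeight_eq (β : ℝ) (p : ℕ) {n : ℕ} (hn : n ≠ 0) (σ : Fin n → Bool) :
    cwWeight β p n σ = exp (n * (β * mag σ ^ p)) := by
  have hn' : (n : ℝ) ≠ 0 := by exact_mod_cast hn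
  rw [cwWeight, mag, zpow_sub₀ hn', zpow_one, zpow_natCast, div_pow]
  field_simp

lemma sum_indicator_cwWeight (β : ℝ) (p : ℕ) {n : ℕ} (hn : n ≠ 0) (A : Set ℝ) :
    ∑ σ : Fin n → Bool, {σ | mag σ ∈ A}.indicator (cwWeight β p n) σ =
      gridSum (fun x => β * x ^ p) A n := by
  classical
  let w : ℕ → ℝ := fun k => if gridPoint n k ∈ A then exp (n * (β * gridPoint n k ^ p)) else 0
  have hw : ∀ σ, {σ | mag σ ∈ A}.indicator (cwWeight β p n) σ = w #{i | σ i = true} := by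
    intro σ
    simp only [Set.indicator_apply, Set.mem_ofPred_eq, cwWeight_eq β p hn, mag_eq_gridPoint, w]
  rw [Fintype.sum_congr _ _ hw, sum_fun_bool_eq_sum_choose, gridSum, sum_filter]
  exact sum_congr rfl fun k _ => by simp only [w, nsmul_eq_mul, mul_ite, mul_zero]

lemma cwProb_mag_mem (β : ℝ) (p : ℕ) {n : ℕ} (hn : n ≠ 0) (A : Set ℝ) :
    cwProb β p n {σ | mag σ ∈ A} =
      gridSum (fun x => β * x ^ p) A n / gridSum (fun x => β * x ^ p) (Set.Icc (-1) 1) n := by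
  have hall : ∀ σ : Fin n → Bool, cwWeight β p n σ =
      {σ | mag σ ∈ Set.Icc (-1) 1}.indicator (cwWeight β p n) σ :=
    fun σ => (Set.indicator_of_mem (s := {σ | mag σ ∈ Set.Icc (-1) 1}) (mag_mem_Icc σ) _).symm
  rw [cwProb, sum_indicator_cwWeight β p hn, Fintype.sum_congr _ _ hall,
    sum_indicator_cwWeight β p hn]

lemma continuous_bahH (β : ℝ) (p : ℕ) : Continuous (bahH β p) :=
  (continuous_const.mul (continuous_pow p)).sub continuous_bahI

lemma hasDerivAt_bahI {x : ℝ} (hx : x ∈ Set.Ioo (-1) 1) :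
    HasDerivAt bahI ((log (1 + x) - log (1 - x)) / 2) x := by
  have hplus := (hasDerivAt_mul_log (x := 1 + x) (by linarith [hx.1])).comp x
    ((hasDerivAt_id x).const_add 1)
  have hminus := (hasDerivAt_mul_log (x := 1 - x) (by linarith [hx.2])).comp x
    ((hasDerivAt_id x).const_sub 1)
  exact ((hplus.add hminus).div_const 2).congr_deriv (by ring)

lemma hasDerivAt_bahH (β : ℝ) (p : ℕ) {x : ℝ} (hx : x ∈ Set.Ioo (-1) 1) :
    HasDerivAt (bahH β p) (β * (p * x ^ (p - 1)) - (log (1 + x) - log (1 - x)) / 2) x :=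
  ((hasDerivAt_pow p x).const_mul β).sub (hasDerivAt_bahI hx)

-- Once `1 - x < exp (-2 |β| p)`, `I'(x) ≥ -log (1 - x) / 2` exceeds `|β| p ≥ (β xᵖ)'`.
lemma exists_bahH_one_lt (β : ℝ) (p : ℕ) : ∃ y ∈ Set.Ico (-1 : ℝ) 1, bahH β p 1 < bahH β p y := by
  set δ := min (1 / 2) (exp (-(2 * |β| * p)))
  have hδ0 : 0 < δ := lt_min (by norm_num) (exp_pos _)
  have hδ1 : δ ≤ 1 / 2 := min_le_left _ _
  have hderiv : ∀ x ∈ Set.Ioo (1 - δ) 1, deriv (bahH β p) x < 0 := by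
    intro x hx
    have hx0 : 0 ≤ x := by linarith [hx.1]
    rw [(hasDerivAt_bahH β p ⟨by linarith [hx.1], hx.2⟩).deriv]
    have hlog_minus : log (1 - x) < -(2 * |β| * p) := by
      rw [← log_exp (-(2 * |β| * p))]
      exact log_lt_log (by linarith [hx.2])
        (by linarith [hx.1, min_le_right (1 / 2) (exp (-(2 * |β| * p)))])
    have hlog_plus : 0 ≤ log (1 + x) := log_nonneg (by linarith)
    have hpow : β * (p * x ^ (p - 1)) ≤ |β| * p :=
      calc β * (p * x ^ (p - 1)) ≤ |β| * (p * x ^ (p - 1)) :=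
            mul_le_mul_of_nonneg_right (le_abs_self β) (by positivity)
        _ ≤ |β| * p := by
            gcongr
            exact mul_le_of_le_one_right (Nat.cast_nonneg p) (pow_le_one₀ hx0 hx.2.le)
    linarith
  have hanti : StrictAntiOn (bahH β p) (Set.Icc (1 - δ) 1) := by
    refine strictAntiOn_of_deriv_neg (convex_Icc _ _) ?_ (by rwa [interior_Icc])
    exact (continuous_bahH β p).continuousOn
  exact ⟨1 - δ, ⟨by linarith, by linarith⟩,
    hanti ⟨le_rfl, by linarith⟩ ⟨by linarith, le_rfl⟩ (by linarith)⟩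

lemma lt_one_of_isMaxOn_bahH {β : ℝ} {p : ℕ} {m : ℝ} (hm : m ∈ Set.Icc (-1 : ℝ) 1)
    (hmax : IsMaxOn (bahH β p) (Set.Icc (-1) 1) m) : m < 1 := by
  refine hm.2.lt_of_ne fun h => ?_
  obtain ⟨y, hy, hlt⟩ := exists_bahH_one_lt β p
  exact (hmax ⟨hy.1, hy.2.le⟩).not_gt (h ▸ hlt)

lemma sSup_bahH_Ioc_lt {p : ℕ} (hp : p ≠ 0) {β β₀ m : ℝ} (hβ : β₀ < β) (hm0 : 0 < m) (hm1 : m < 1)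
    (hmax : IsMaxOn (bahH β p) (Set.Icc (-1) 1) m) :
    sSup (bahH β₀ p '' Set.Ioc m 1) < sSup (bahH β₀ p '' Set.Icc (-1) 1) := by
  have hm : m ∈ Set.Ioo (-1) 1 := ⟨by linarith, hm1⟩
  have hshift : ∀ x, bahH β₀ p x = bahH β p x - (β - β₀) * x ^ p := fun x => by
    simp only [bahH]; ring
  have hIoc : sSup (bahH β₀ p '' Set.Ioc m 1) ≤ bahH β₀ p m := by
    refine csSup_le ((Set.nonempty_Ioc.2 hm1).image _) ?_
    rintro _ ⟨x, hx, rfl⟩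
    have hpow : m ^ p < x ^ p := pow_lt_pow_left₀ hx.1 hm0.le hp
    have hHx : bahH β p x ≤ bahH β p m := hmax ⟨by linarith [hx.1], hx.2⟩
    have := mul_lt_mul_of_pos_left hpow (sub_pos.2 hβ)
    rw [hshift, hshift m]
    linarith
  have hIcc : bahH β₀ p m < sSup (bahH β₀ p '' Set.Icc (-1) 1) := by
    have hbdd : BddAbove (bahH β₀ p '' Set.Icc (-1) 1) :=
      (isCompact_Icc.image (continuous_bahH β₀ p)).bddAbove
    by_contra! hle
    have hmax₀ : IsMaxOn (bahH β₀ p) (Set.Icc (-1) 1) m :=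
      fun x hx => (le_csSup hbdd ⟨x, hx, rfl⟩).trans hle
    have hnhds : Set.Icc (-1 : ℝ) 1 ∈ 𝓝 m := Icc_mem_nhds hm.1 hm.2
    have hd₀ := (hmax₀.isLocalMax hnhds).hasDerivAt_eq_zero (hasDerivAt_bahH β₀ p hm)
    have hd := (hmax.isLocalMax hnhds).hasDerivAt_eq_zero (hasDerivAt_bahH β p hm)
    have hpos : 0 < (β - β₀) * (p * m ^ (p - 1)) := by
      have : (0 : ℝ) < p := by exact_mod_cast Nat.pos_of_ne_zero hp
      have := sub_pos.2 hβ
      positivity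
    linarith
  exact hIoc.trans_lt hIcc

theorem statement16_general (p : ℕ) (hp : 2 ≤ p) (β β₀ : ℝ) (h1 : β₀ < β)
    (m : ℝ) (hm0 : 0 < m) (hm1 : m ∈ Set.Icc (-1 : ℝ) 1)
    (hmax : IsMaxOn (bahH β p) (Set.Icc (-1 : ℝ) 1) m) :
    Tendsto (fun n : ℕ =>
        (1 / (n : ℝ)) * Real.log (cwProb β₀ p n {σ : Fin n → Bool | m < mag σ}))
      atTop
      (nhds (sSup (bahH β₀ p '' Set.Ioc m 1) - sSup (bahH β₀ p '' Set.Icc (-1 : ℝ) 1))) ∧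
    sSup (bahH β₀ p '' Set.Ioc m 1) - sSup (bahH β₀ p '' Set.Icc (-1 : ℝ) 1) < 0 := by
  have hm : m < 1 := lt_one_of_isMaxOn_bahH hm1 hmax
  have hg : Continuous fun x : ℝ => β₀ * x ^ p := by fun_prop
  have hnum := tendsto_one_div_mul_log_gridSum hg Set.ordConnected_Ioc (Set.right_mem_Ioc.2 hm)
    (Set.Ioc_subset_Icc_self.trans (Set.Icc_subset_Icc_left hm1.1))
  have hden := tendsto_one_div_mul_log_gridSum hg Set.ordConnected_Icc
    (Set.right_mem_Icc.2 (by norm_num : (-1 : ℝ) ≤ 1)) subset_rfl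
  refine ⟨?_, sub_neg.2 (sSup_bahH_Ioc_lt (by omega) h1 hm0 hm hmax)⟩
  rw [← add_sub_add_left_eq_sub _ _ (log 2)]
  refine (hnum.sub hden).congr' ?_
  filter_upwards [eventually_ne_atTop 0] with n hn
  have hevent : {σ : Fin n → Bool | m < mag σ} = {σ | mag σ ∈ Set.Ioc m 1} := by
    ext σ
    simp [(mag_mem_Icc σ).2]
  rw [hevent, cwProb_mag_mem β₀ p hn, log_div (gridSum_pos _ (Set.right_mem_Ioc.2 hm) hn).ne'
    (gridSum_pos _ (Set.right_mem_Icc.2 (by norm_num)) hn).ne', mul_sub]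

/-- For `p ≥ 2` and `β > β₀ > β*(p)`, with `m = m_*(β,p)` the positive global maximizer
of `H_{β,p}` on `[−1,1]`, under the `p`-tensor Curie–Weiss model `P_{β₀,p}`:
`(1/n) log P_{β₀,p}(X̄_n > m) → sup_{x ∈ (m,1]} H_{β₀,p}(x) − sup_{[−1,1]} H_{β₀,p}`,
and this limit is strictly negative. -/
theorem statement16 (p : ℕ) (hp : 2 ≤ p) (β β₀ : ℝ) (h0 : betaStar p < β₀) (h1 : β₀ < β)
    (m : ℝ) (hm0 : 0 < m) (hm1 : m ∈ Set.Icc (-1 : ℝ) 1)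
    (hmax : IsMaxOn (bahH β p) (Set.Icc (-1 : ℝ) 1) m) :
    Tendsto (fun n : ℕ =>
        (1 / (n : ℝ)) * Real.log (cwProb β₀ p n {σ : Fin n → Bool | m < mag σ}))
      atTop
      (nhds (sSup (bahH β₀ p '' Set.Ioc m 1) - sSup (bahH β₀ p '' Set.Icc (-1 : ℝ) 1))) ∧
    sSup (bahH β₀ p '' Set.Ioc m 1) - sSup (bahH β₀ p '' Set.Icc (-1 : ℝ) 1) < 0 :=
  statement16_general p hp β β₀ h1 m hm0 hm1 hmax
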